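/- Let v₁ = (0,0,0), v₂ = (1000,0,0), v₃ = (70,366,0), v₄ = (673,−413,−168), v₅ = (−49,−201,491), v₆ = (186,−235,−481), v₇ = (535,288,297), v₈ = (−159,−286,−137), v₉ = (831,−349,−17), v₁₀ = (210,−697,685) in ℝ³, and define edge vectors eᵢ = v_{i+1} − vᵢ for i = 1, …, 9 and e₁₀ = v₁ − v₁₀. Then there is no w ∈ ℝ³ such that (−1)^{i+1} (w · eᵢ) > 0 for every i ∈ {1, …, 10}. -/

import Mathlib

/-! Already four of the signed edge vectors, `e₁, −e₂, −e₈, e₉`, are positively dependent: a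
nonnegative combination of them vanishes. Pairing that combination with `w` gives a sum of
positive numbers equal to `0` (the easy direction of Gordan's alternative). -/

/-- The vertices of the paper's 10-stick polygonal realization of the knot `8_4`.
Here `vert8_4 i` is the paper's vertex `v_(i+1)`. -/
noncomputable def vert8_4 : Fin 10 → (Fin 3 → ℝ) :=
  ![![0, 0, 0], ![1000, 0, 0], ![70, 366, 0], ![673, -413, -168], ![-49, -201, 491], ![186, -235, -481], ![535, 288, 297], ![-159, -286, -137], ![831, -349, -17], ![210, -697, 685]]

/-- The edge vectors `eᵢ = v_(i+1) − vᵢ` (cyclically, so `e₁₀ = v₁ − v₁₀`);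
here `edge8_4 i` is the paper's `e_(i+1)`, using wrap-around addition on `Fin 10`. -/
noncomputable def edge8_4 (i : Fin 10) : Fin 3 → ℝ :=
  vert8_4 (i + 1) - vert8_4 i

open Matrix

theorem not_exists_forall_dotProduct_pos_of_sum_smul_eq_zero {ι n : Type*} [Fintype ι]
    [Fintype n] {v : ι → n → ℝ} {c : ι → ℝ} (hc : 0 ≤ c) (hc_ne : c ≠ 0)
    (hsum : ∑ i, c i • v i = 0) : ¬ ∃ w : n → ℝ, ∀ i, 0 < w ⬝ᵥ v i := by
  rintro ⟨w, hw⟩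
  have hpos : 0 < ∑ i, c i * (w ⬝ᵥ v i) := by
    obtain ⟨i, hi⟩ := Function.ne_iff.mp hc_ne
    exact Finset.sum_pos' (fun j _ => mul_nonneg (hc j) (hw j).le)
      ⟨i, Finset.mem_univ i, mul_pos (lt_of_le_of_ne (hc i) (Ne.symm hi)) (hw i)⟩
  have hzero : ∑ i, c i * (w ⬝ᵥ v i) = 0 := by
    simp only [← smul_eq_mul, ← dotProduct_smul, ← dotProduct_sum, hsum, dotProduct_zero]
  exact hpos.ne' hzero

-- The weights of `e₁, −e₂, −e₈` solve a 3 × 3 linear system once the weight of `e₉` is fixed.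
def edgeWeights8_4 : Fin 10 → ℝ := ![1551909, 13700, 0, 0, 0, 0, 0, 1427400, 244000, 0]

theorem sum_edgeWeights8_4_smul_signed_edge :
    ∑ i, edgeWeights8_4 i • ((-1 : ℝ) ^ (i : ℕ) • edge8_4 i) = 0 := by
  ext j
  fin_cases j <;> simp [Fin.sum_univ_succ, edgeWeights8_4, edge8_4, vert8_4] <;> norm_num

theorem edgeWeights8_4_nonneg : 0 ≤ edgeWeights8_4 := by
  intro i
  fin_cases i <;> simp [edgeWeights8_4]

theorem edgeWeights8_4_ne_zero : edgeWeights8_4 ≠ 0 :=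
  Function.ne_iff.mpr ⟨0, by simp [edgeWeights8_4]⟩

theorem no_alternating_direction_8_4 :
    ¬ ∃ w : Fin 3 → ℝ, ∀ i : Fin 10,
        0 < (-1 : ℝ) ^ (i : ℕ) * ∑ j : Fin 3, w j * edge8_4 i j := by
  have key := not_exists_forall_dotProduct_pos_of_sum_smul_eq_zero edgeWeights8_4_nonneg
    edgeWeights8_4_ne_zero sum_edgeWeights8_4_smul_signed_edge
  simp only [dotProduct_smul, smul_eq_mul] at key
  exact key
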